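/- Let G be a group acting by homeomorphisms on an infinite compact Hausdorff space Z, and suppose the action is extremely proximal: for every nonempty proper closed subset A ⊆ Z there exists z ∈ Z such that for every open neighborhood V of z there is g ∈ G with g · A ⊆ V. Then the action is strongly proximal: for every Borel probability measure μ on Z there exists z ∈ Z such that the Dirac point mass δ_z lies in the closure of the orbit { g · μ : g ∈ G } in the space of probability measures on Z with the topology of weak convergence (where g · μ denotes the pushforward of μ under the homeomorphism g). -/

import Mathlib

open MeasureTheory
open scoped ENNReal NNReal BoundedContinuousFunction

lemma small_open {Z : Type*} [TopologicalSpace Z] [CompactSpace Z] [T2Space Z]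
    [Infinite Z] [MeasurableSpace Z] [BorelSpace Z]
    (μ : Measure Z) [IsProbabilityMeasure μ] {ε : ℝ≥0∞} (hε : 0 < ε) :
    ∃ U : Set Z, IsOpen U ∧ U.Nonempty ∧ U ≠ Set.univ ∧ μ U < ε := by
  obtain ⟨n, hn⟩ := ENNReal.exists_inv_nat_lt hε.ne'
  set m := max n 2 with hm
  have hinv : (m : ℝ≥0∞)⁻¹ < ε :=
    lt_of_le_of_lt (ENNReal.inv_le_inv.mpr (by exact_mod_cast le_max_left n 2)) hn
  -- a finset of m distinct points
  set e := Infinite.natEmbedding Z with he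
  set s : Finset Z := (Finset.range m).map e with hs
  have hcard : s.card = m := by simp [hs]
  obtain ⟨U, hU, hdisj⟩ := s.finite_toSet.t2_separation
  -- not all U x (x ∈ s) have measure ≥ ε
  have : ¬ ∀ x ∈ s, ε ≤ μ (U x) := by
    intro hall
    have hsum : ∑ x ∈ s, μ (U x) ≤ 1 := by
      rw [← measure_biUnion_finset (hdisj.subset (by simp)) (fun x _ => (hU x).2.measurableSet)]
      exact (measure_mono (Set.subset_univ _)).trans_eq (measure_univ (μ := μ))
    have : (m : ℝ≥0∞) * ε ≤ 1 := by
      calc (m : ℝ≥0∞) * ε = s.card • ε := by rw [hcard]; simp [nsmul_eq_mul]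
      _ ≤ ∑ x ∈ s, μ (U x) := Finset.card_nsmul_le_sum s _ _ hall
      _ ≤ 1 := hsum
    have hlt : (1 : ℝ≥0∞) < (m : ℝ≥0∞) * ε := by
      have hm0 : (m : ℝ≥0∞) ≠ 0 := by
        simp [hm]
      calc (1 : ℝ≥0∞) = (m : ℝ≥0∞) * (m : ℝ≥0∞)⁻¹ := by
            rw [ENNReal.mul_inv_cancel hm0 (by simp)]
      _ < (m : ℝ≥0∞) * ε := by
            exact (ENNReal.mul_lt_mul_iff_right hm0 (by simp)).mpr hinv
    exact absurd this (not_le.mpr hlt)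
  push_neg at this
  obtain ⟨x, hxs, hxε⟩ := this
  refine ⟨U x, (hU x).2, ⟨x, (hU x).1⟩, ?_, hxε⟩
  -- proper: another point of s lies outside U x
  have h2 : 2 ≤ s.card := by rw [hcard]; exact le_max_right n 2
  obtain ⟨y, hys, hyx⟩ := Finset.exists_mem_ne (s := s) (by omega) x
  intro hUuniv
  have : Disjoint (U y) (U x) := hdisj (by simp [hys]) (by simp [hxs]) (by simpa using hyx)
  exact (this.ne_of_mem (hU y).1 (hUuniv ▸ Set.mem_univ y)) rfl

lemma key_pt {G Z : Type*} [Group G] [TopologicalSpace Z] [CompactSpace Z] [T2Space Z]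
    [Infinite Z] [MeasurableSpace Z] [BorelSpace Z] [MulAction G Z]
    (hcont : ∀ g : G, Continuous fun z : Z => g • z)
    (hep : ∀ A : Set Z, A.Nonempty → A ≠ Set.univ → IsClosed A →
      ∃ z : Z, ∀ V : Set Z, IsOpen V → z ∈ V → ∃ g : G, (fun a => g • a) '' A ⊆ V)
    (μ : Measure Z) [IsProbabilityMeasure μ] {ε : ℝ≥0∞} (hε : 0 < ε) :
    ∃ z : Z, ∀ V : Set Z, IsOpen V → z ∈ V →
      ∃ g : G, μ.map (fun a => g • a) Vᶜ < ε := by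
  obtain ⟨U, hUo, hUne, hUproper, hUmeas⟩ := small_open μ hε
  obtain ⟨z, hz⟩ := hep Uᶜ (by
      rw [Set.nonempty_compl]; exact hUproper)
    (by
      intro h
      exact hUne.ne_empty (by simpa using congrArg compl h))
    hUo.isClosed_compl
  refine ⟨z, fun V hVo hzV => ?_⟩
  obtain ⟨g, hg⟩ := hz V hVo hzV
  refine ⟨g, ?_⟩
  rw [Measure.map_apply (hcont g).measurable hVo.measurableSet.compl]
  refine lt_of_le_of_lt (measure_mono ?_) hUmeas
  intro x hx
  by_contra hxU
  exact hx (hg ⟨x, hxU, rfl⟩)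

lemma key_pt' {G Z : Type*} [Group G] [TopologicalSpace Z] [CompactSpace Z] [T2Space Z]
    [Infinite Z] [MeasurableSpace Z] [BorelSpace Z] [MulAction G Z]
    (hcont : ∀ g : G, Continuous fun z : Z => g • z)
    (hep : ∀ A : Set Z, A.Nonempty → A ≠ Set.univ → IsClosed A →
      ∃ z : Z, ∀ V : Set Z, IsOpen V → z ∈ V → ∃ g : G, (fun a => g • a) '' A ⊆ V)
    (μ : Measure Z) [IsProbabilityMeasure μ] :
    ∃ z : Z, ∀ ε : ℝ≥0∞, 0 < ε → ∀ V : Set Z, IsOpen V → z ∈ V →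
      ∃ g : G, μ.map (fun a => g • a) Vᶜ < ε := by
  choose zs hzs using fun n : ℕ =>
    key_pt hcont hep μ (ε := ((n : ℝ≥0∞) + 1)⁻¹) (ENNReal.inv_pos.mpr (by simp))
  obtain ⟨z, hz⟩ := exists_clusterPt_of_compactSpace (Filter.map zs Filter.atTop)
  refine ⟨z, fun ε hε V hVo hzV => ?_⟩
  obtain ⟨n, hn⟩ := ENNReal.exists_inv_nat_lt hε.ne'
  have hfreq : ∃ᶠ m in Filter.atTop, zs m ∈ V :=
    (mapClusterPt_iff_frequently).mp hz V (hVo.mem_nhds hzV)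
  obtain ⟨m, hm, hzm⟩ := Filter.frequently_atTop.mp hfreq n
  obtain ⟨g, hg⟩ := hzs m V hVo hzm
  refine ⟨g, lt_of_lt_of_le hg ?_⟩
  calc ((m : ℝ≥0∞) + 1)⁻¹ ≤ (m : ℝ≥0∞)⁻¹ := ENNReal.inv_le_inv.mpr le_self_add
  _ ≤ (n : ℝ≥0∞)⁻¹ := ENNReal.inv_le_inv.mpr (by exact_mod_cast hm)
  _ ≤ ε := hn.le

lemma integral_dist_le_aux {Z : Type*} [TopologicalSpace Z] [MeasurableSpace Z]
    [OpensMeasurableSpace Z] (f : Z →ᵇ ℝ) (z : Z) (ν : Measure Z) [IsProbabilityMeasure ν]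
    {V : Set Z} (hV : MeasurableSet V) {δ : ℝ} (hδ : 0 ≤ δ)
    (hVf : ∀ x ∈ V, dist (f x) (f z) ≤ δ) :
    dist (∫ x, f x ∂ν) (f z) ≤ δ + 2 * ‖f‖ * (ν Vᶜ).toReal := by
  have hfi : Integrable (fun x => f x) ν := f.integrable ν
  have hconst : Integrable (fun _ : Z => f z) ν := integrable_const _
  have h1 : (∫ x, f x ∂ν) - f z = ∫ x, (f x - f z) ∂ν := by
    rw [integral_sub hfi hconst, integral_const]
    simp
  have hindint : Integrable (fun x => Vᶜ.indicator (fun _ => 2 * ‖f‖) x) ν :=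
    (integrable_const _).indicator hV.compl
  have h2 : ∫ x, |f x - f z| ∂ν ≤ ∫ x, (δ + Vᶜ.indicator (fun _ => 2 * ‖f‖) x) ∂ν := by
    refine integral_mono (hfi.sub hconst).abs ((integrable_const _).add hindint) ?_
    intro x
    by_cases hx : x ∈ V
    · have := hVf x hx
      rw [Real.dist_eq] at this
      have hind : (0:ℝ) ≤ Vᶜ.indicator (fun _ => 2 * ‖f‖) x :=
        Set.indicator_nonneg (fun _ _ => by positivity) x
      simpa using le_add_of_le_of_nonneg this hind
    · have hmem : Vᶜ.indicator (fun _ => 2 * ‖f‖) x = 2 * ‖f‖ :=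
        Set.indicator_of_mem (Set.mem_compl hx) _
      have habs : |f x - f z| ≤ ‖f x‖ + ‖f z‖ := by
        rw [Real.norm_eq_abs, Real.norm_eq_abs]; exact abs_sub _ _
      have h3 : ‖f x‖ ≤ ‖f‖ := f.norm_coe_le_norm x
      have h4 : ‖f z‖ ≤ ‖f‖ := f.norm_coe_le_norm z
      simp only [hmem]
      linarith
  have h5 : ∫ x, (δ + Vᶜ.indicator (fun _ => 2 * ‖f‖) x) ∂ν
      = δ + (ν Vᶜ).toReal * (2 * ‖f‖) := by
    rw [integral_add (integrable_const _) hindint, integral_const,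
      integral_indicator_const _ hV.compl]
    simp [Measure.real]
  calc dist (∫ x, f x ∂ν) (f z) = |(∫ x, f x ∂ν) - f z| := Real.dist_eq _ _
  _ = |∫ x, (f x - f z) ∂ν| := by rw [h1]
  _ ≤ ∫ x, |f x - f z| ∂ν := by
      simpa [Real.norm_eq_abs] using
        norm_integral_le_integral_norm (μ := ν) (f := fun x => f x - f z)
  _ ≤ δ + (ν Vᶜ).toReal * (2 * ‖f‖) := h2.trans h5.le
  _ = δ + 2 * ‖f‖ * (ν Vᶜ).toReal := by ring
/-- Let a group `G` act by homeomorphisms on an infinite compact Hausdorff space `Z`, and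
suppose the action is extremely proximal: for every nonempty proper closed `A ⊆ Z` there
is `z ∈ Z` such that every open neighbourhood `V` of `z` contains `g • A` for some
`g ∈ G`. Then the action is strongly proximal: for every Borel probability measure `μ` on
`Z` there is `z ∈ Z` such that the Dirac measure `δ_z` lies in the weak closure of the
orbit `{g • μ : g ∈ G}` (pushforwards of `μ`) in the space of probability measures. -/
theorem stmt19 {G Z : Type*} [Group G] [TopologicalSpace Z] [CompactSpace Z] [T2Space Z]
    [Infinite Z] [MeasurableSpace Z] [BorelSpace Z] [MulAction G Z]
    (hcont : ∀ g : G, Continuous fun z : Z => g • z)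
    (hep : ∀ A : Set Z, A.Nonempty → A ≠ Set.univ → IsClosed A →
      ∃ z : Z, ∀ V : Set Z, IsOpen V → z ∈ V → ∃ g : G, (fun a => g • a) '' A ⊆ V) :
    ∀ μ : ProbabilityMeasure Z, ∃ z : Z,
      (⟨Measure.dirac z, inferInstance⟩ : ProbabilityMeasure Z) ∈
        closure {ν : ProbabilityMeasure Z |
          ∃ g : G, ν = μ.map ((hcont g).measurable.aemeasurable)} := by
  intro μ
  obtain ⟨z, hz⟩ := key_pt' hcont hep (μ : Measure Z)
  refine ⟨z, ?_⟩
  set δz : ProbabilityMeasure Z := ⟨Measure.dirac z, inferInstance⟩ with hδz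
  set S : Set (ProbabilityMeasure Z) :=
    {ν : ProbabilityMeasure Z | ∃ g : G, ν = μ.map ((hcont g).measurable.aemeasurable)} with hS
  -- index type: open neighbourhoods of z together with a precision
  set I : Type _ := {p : Set Z × ℕ // IsOpen p.1 ∧ z ∈ p.1} with hI
  haveI : Nonempty I := ⟨⟨(Set.univ, 0), isOpen_univ, Set.mem_univ z⟩⟩
  set T : I → Set (ProbabilityMeasure Z) := fun p =>
    {ν : ProbabilityMeasure Z | ν ∈ S ∧
      (ν : Measure Z) p.1.1ᶜ < ((p.1.2 : ℝ≥0∞) + 1)⁻¹} with hT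
  -- each T p is nonempty
  have hTne : ∀ p : I, (T p).Nonempty := by
    rintro ⟨⟨V, n⟩, hVo, hzV⟩
    obtain ⟨g, hg⟩ := hz ((n : ℝ≥0∞) + 1)⁻¹ (ENNReal.inv_pos.mpr (by simp)) V hVo hzV
    refine ⟨μ.map ((hcont g).measurable.aemeasurable), ⟨g, rfl⟩, ?_⟩
    simpa using hg
  set L : Filter (ProbabilityMeasure Z) := ⨅ p : I, Filter.principal (T p) with hL
  -- the filter L is nontrivial
  have hdir : Directed (· ≥ ·) fun p : I => Filter.principal (T p) := by
    rintro ⟨⟨V, n⟩, hVo, hzV⟩ ⟨⟨W, m⟩, hWo, hzW⟩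
    refine ⟨⟨(V ∩ W, max n m), hVo.inter hWo, hzV, hzW⟩, ?_, ?_⟩ <;>
      refine Filter.principal_mono.mpr ?_ <;>
      rintro ν ⟨hνS, hνc⟩ <;>
      refine ⟨hνS, lt_of_le_of_lt (measure_mono (Set.compl_subset_compl.mpr ?_)) (lt_of_lt_of_le hνc (ENNReal.inv_le_inv.mpr (by exact_mod_cast by simp [Nat.succ_le_succ, le_max_left, le_max_right])))⟩
    · exact Set.inter_subset_left
    · exact Set.inter_subset_right
  haveI hLne : L.NeBot := Filter.iInf_neBot_of_directed' hdir
    (fun p => Filter.principal_neBot_iff.mpr (hTne p))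
  have hLS : L ≤ Filter.principal S :=
    le_trans (iInf_le _ (⟨(Set.univ, 0), isOpen_univ, Set.mem_univ z⟩ : I))
      (Filter.principal_mono.mpr fun ν h => h.1)
  -- L converges to δz
  have hLnhds : L ≤ nhds δz := by
    rw [← Filter.tendsto_id']
    refine ProbabilityMeasure.tendsto_iff_forall_integral_tendsto.mpr fun f => ?_
    have hδint : ∫ x, f x ∂(δz : Measure Z) = f z := by
      rw [hδz]
      exact integral_dirac _ z
    rw [hδint]
    refine Metric.tendsto_nhds.mpr fun ε hε => ?_
    -- choose neighbourhood and precision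
    set V0 : Set Z := (fun x => f x) ⁻¹' Metric.ball (f z) (ε / 4) with hV0
    have hV0o : IsOpen V0 := f.continuous.isOpen_preimage _ Metric.isOpen_ball
    have hzV0 : z ∈ V0 := by simp [hV0, Metric.mem_ball, hε]
    obtain ⟨N, hN⟩ := exists_nat_gt (4 * (‖f‖ + 1) / ε)
    refine Filter.mem_iInf_of_mem (⟨(V0, N), hV0o, hzV0⟩ : I) ?_
    rw [Filter.mem_principal]
    rintro ν ⟨hνS, hνc⟩
    simp only [Set.mem_setOf_eq, id_eq]
    -- the measure of the complement is small
    have htfin : (ν : Measure Z) V0ᶜ ≠ ∞ := (measure_lt_top _ _).ne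
    have ht1 : ((ν : Measure Z) V0ᶜ).toReal ≤ ((N : ℝ) + 1)⁻¹ := by
      have := ENNReal.toReal_mono (by simp) hνc.le
      simpa [ENNReal.toReal_inv, ENNReal.toReal_add] using this
    have hmain : dist (∫ x, f x ∂(ν : Measure Z)) (f z)
        ≤ ε / 4 + 2 * ‖f‖ * (((ν : Measure Z)) V0ᶜ).toReal := by
      refine integral_dist_le_aux f z _ hV0o.measurableSet (by positivity) ?_
      intro x hx
      exact (Metric.mem_ball.mp hx).le
    have hfnn : (0:ℝ) ≤ ‖f‖ := norm_nonneg f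
    have htnn : (0:ℝ) ≤ ((ν : Measure Z) V0ᶜ).toReal := ENNReal.toReal_nonneg
    have hNpos : (0:ℝ) < (N : ℝ) + 1 := by positivity
    have hsmall : 2 * ‖f‖ * (((ν : Measure Z)) V0ᶜ).toReal < ε / 2 := by
      have h1 : 2 * ‖f‖ * (((ν : Measure Z)) V0ᶜ).toReal ≤ 2 * (‖f‖ + 1) * ((N : ℝ) + 1)⁻¹ := by
        have := mul_le_mul (by linarith : 2 * ‖f‖ ≤ 2 * (‖f‖ + 1)) ht1 htnn (by linarith)
        linarith
      have h2 : 2 * (‖f‖ + 1) * ((N : ℝ) + 1)⁻¹ < ε / 2 := by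
        rw [mul_inv_lt_iff₀ hNpos]
        have : 4 * (‖f‖ + 1) / ε < (N : ℝ) + 1 := by linarith
        rw [div_lt_iff₀ hε] at this
        nlinarith
      linarith
    linarith [hmain, hsmall]
  -- conclude
  exact @mem_closure_of_tendsto _ MeasureTheory.ProbabilityMeasure.instTopologicalSpace _ _ _ id L hLne
    (Filter.tendsto_id'.mpr hLnhds) (show ∀ᶠ x in L, id x ∈ S from Filter.le_principal_iff.mp hLS)
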